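/- arXiv:2504.17118 — 2 statements merged into one kernel-verified Lean document; each statement's English description precedes it below -/
import Mathlib

section
/- For any two probability measures P and Q on a measurable space and any measurable event A, the sum of the type-I and type-II error probabilities satisfies Q(A) + P(Aᶜ) ≥ (1/2) · exp(-D(P‖Q)) (the Bretagnolle–Huber inequality). -/
open MeasureTheory
open scoped Classical

/-- Kullback–Leibler divergence `D(P‖Q)` as an extended real number. -/
noncomputable def klDiv {Ω : Type*} [MeasurableSpace Ω] (P Q : Measure Ω) : EReal :=
  if P ≪ Q ∧ Integrable (llr P Q) P then ((∫ x, llr P Q x ∂P : ℝ) : EReal) else ⊤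

/-!
With `g = dP/dQ`, Jensen's inequality for `exp` under `P` gives
`exp (-D(P‖Q) / 2) ≤ ∫ exp (-log g / 2) dP = ∫ √g dQ`. Since `√g = √(min 1 g · max 1 g)`,
Cauchy–Schwarz bounds `(∫ √g dQ)²` by `∫ min 1 g dQ · ∫ max 1 g dQ ≤ 2 ∫ min 1 g dQ`, and
`∫ min 1 g dQ ≤ Q(A) + P(Aᶜ)` by integrating `1` over `A` and `g` over `Aᶜ`.
-/

open Real

lemma Real.mul_exp_neg_log_div_two {x : ℝ} (hx : 0 ≤ x) : x * exp (-log x / 2) = √x := by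
  rcases hx.eq_or_lt with rfl | hx
  · simp
  rw [sqrt_eq_rpow, rpow_def_of_pos hx, ← exp_log hx, ← exp_add, log_exp]
  ring_nf

section Integral

variable {α : Type*} [MeasurableSpace α] {μ : Measure α} {f g : α → ℝ}

lemma memLp_two_sqrt (hf0 : 0 ≤ f) (hf : Integrable f μ) : MemLp (fun x ↦ √(f x)) 2 μ := by
  rw [memLp_two_iff_integrable_sq hf.aestronglyMeasurable.aemeasurable.sqrt.aestronglyMeasurable]
  exact hf.congr (.of_forall fun x ↦ (sq_sqrt (hf0 x)).symm)

lemma integral_sqrt_mul_le (hf0 : 0 ≤ f) (hg0 : 0 ≤ g) (hf : Integrable f μ)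
    (hg : Integrable g μ) :
    ∫ x, √(f x * g x) ∂μ ≤ √(∫ x, f x ∂μ) * √(∫ x, g x ∂μ) := by
  have hholder := integral_mul_le_Lp_mul_Lq_of_nonneg Real.HolderConjugate.two_two
    (.of_forall fun x ↦ sqrt_nonneg (f x)) (.of_forall fun x ↦ sqrt_nonneg (g x))
    (by simpa using memLp_two_sqrt hf0 hf) (by simpa using memLp_two_sqrt hg0 hg)
  simp only [← sqrt_mul (hf0 _), rpow_two, sq_sqrt (hf0 _), sq_sqrt (hg0 _)] at hholder
  simpa only [← sqrt_eq_rpow] using hholder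

lemma sq_integral_sqrt_mul_le (hf0 : 0 ≤ f) (hg0 : 0 ≤ g) (hf : Integrable f μ)
    (hg : Integrable g μ) :
    (∫ x, √(f x * g x) ∂μ) ^ 2 ≤ (∫ x, min (f x) (g x) ∂μ) * (∫ x, f x ∂μ + ∫ x, g x ∂μ) := by
  have hmin : Integrable (fun x ↦ min (f x) (g x)) μ := hf.inf hg
  have hmax : Integrable (fun x ↦ max (f x) (g x)) μ := hf.sup hg
  have hsum : ∫ x, min (f x) (g x) ∂μ + ∫ x, max (f x) (g x) ∂μ = ∫ x, f x ∂μ + ∫ x, g x ∂μ := by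
    rw [← integral_add hmin hmax, ← integral_add hf hg]
    simp_rw [min_add_max]
  have hCS := integral_sqrt_mul_le (fun x ↦ le_min (hf0 x) (hg0 x))
    (fun x ↦ (hf0 x).trans (le_max_left _ _)) hmin hmax
  simp only [min_mul_max] at hCS
  have hmin0 : 0 ≤ ∫ x, min (f x) (g x) ∂μ := integral_nonneg fun x ↦ le_min (hf0 x) (hg0 x)
  have hmax0 : 0 ≤ ∫ x, max (f x) (g x) ∂μ :=
    integral_nonneg fun x ↦ (hf0 x).trans (le_max_left _ _)
  calc (∫ x, √(f x * g x) ∂μ) ^ 2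
      ≤ (√(∫ x, min (f x) (g x) ∂μ) * √(∫ x, max (f x) (g x) ∂μ)) ^ 2 :=
        pow_le_pow_left₀ (integral_nonneg fun x ↦ sqrt_nonneg _) hCS 2
    _ = (∫ x, min (f x) (g x) ∂μ) * ∫ x, max (f x) (g x) ∂μ := by
        rw [mul_pow, sq_sqrt hmin0, sq_sqrt hmax0]
    _ ≤ _ := by rw [← hsum]; gcongr; linarith

lemma integral_min_le_setIntegral_add_setIntegral_compl {s : Set α} (hs : MeasurableSet s)
    (hf : Integrable f μ) (hg : Integrable g μ) :
    ∫ x, min (f x) (g x) ∂μ ≤ ∫ x in s, f x ∂μ + ∫ x in sᶜ, g x ∂μ := by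
  rw [← integral_add_compl (f := fun x ↦ min (f x) (g x)) hs (hf.inf hg)]
  exact add_le_add
    (setIntegral_mono_on (hf.inf hg).integrableOn hf.integrableOn hs fun x _ ↦ min_le_left _ _)
    (setIntegral_mono_on (hf.inf hg).integrableOn hg.integrableOn hs.compl
      fun x _ ↦ min_le_right _ _)

end Integral

section RnDeriv

variable {α : Type*} [MeasurableSpace α] {μ ν : Measure α}

lemma integral_exp_neg_llr_div_two [SigmaFinite μ] [μ.HaveLebesgueDecomposition ν]
    (hμν : μ ≪ ν) :
    ∫ x, exp (-llr μ ν x / 2) ∂μ = ∫ x, √(μ.rnDeriv ν x).toReal ∂ν := by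
  rw [← integral_toReal_rnDeriv_mul hμν]
  simp_rw [llr, Real.mul_exp_neg_log_div_two ENNReal.toReal_nonneg]

lemma exp_neg_integral_llr_div_two_le [IsProbabilityMeasure μ] [IsFiniteMeasure ν] (hμν : μ ≪ ν)
    (hllr : Integrable (llr μ ν) μ) :
    exp (-(∫ x, llr μ ν x ∂μ) / 2) ≤ ∫ x, √(μ.rnDeriv ν x).toReal ∂ν := by
  have hsqrt : Integrable (fun x ↦ √(μ.rnDeriv ν x).toReal) ν :=
    (memLp_two_sqrt (fun _ ↦ ENNReal.toReal_nonneg) Measure.integrable_toReal_rnDeriv).integrable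
      one_le_two
  have hexp : Integrable (fun x ↦ exp (-llr μ ν x / 2)) μ := by
    rw [← integrable_rnDeriv_smul_iff hμν]
    refine hsqrt.congr (.of_forall fun x ↦ ?_)
    simp only [smul_eq_mul, llr, Real.mul_exp_neg_log_div_two ENNReal.toReal_nonneg]
  rw [← integral_exp_neg_llr_div_two hμν, ← integral_neg, ← integral_div]
  exact convexOn_exp.map_integral_le continuous_exp.continuousOn isClosed_univ
    (.of_forall fun _ ↦ Set.mem_univ _) (hllr.neg.div_const 2) hexp

end RnDeriv

/-- `(⊤ : EReal).toReal = 0`, so the case `D(P‖Q) = ⊤` is split off as the first disjunct. -/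
theorem bretagnolle_huber {Ω : Type*} [MeasurableSpace Ω] (P Q : Measure Ω)
    [IsProbabilityMeasure P] [IsProbabilityMeasure Q] (A : Set Ω) (hA : MeasurableSet A) :
    klDiv P Q = ⊤ ∨
      2⁻¹ * Real.exp (-(klDiv P Q).toReal) ≤ (Q A).toReal + (P Aᶜ).toReal := by
  by_cases h : P ≪ Q ∧ Integrable (llr P Q) P
  swap
  · exact .inl (if_neg h)
  right
  obtain ⟨hPQ, hllr⟩ := h
  rw [klDiv, if_pos ⟨hPQ, hllr⟩, EReal.toReal_coe]
  set D := ∫ x, llr P Q x ∂P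
  set g : Ω → ℝ := fun x ↦ (P.rnDeriv Q x).toReal
  have hg0 : 0 ≤ g := fun _ ↦ ENNReal.toReal_nonneg
  have hg : Integrable g Q := Measure.integrable_toReal_rnDeriv
  have hg1 : ∫ x, g x ∂Q = 1 := by simp [g, Measure.integral_toReal_rnDeriv hPQ]
  have hCS := sq_integral_sqrt_mul_le zero_le_one hg0 (integrable_const 1) hg
  simp only [Pi.one_apply, one_mul, integral_const, probReal_univ, smul_eq_mul, hg1] at hCS
  calc 2⁻¹ * exp (-D) = 2⁻¹ * exp (-D / 2) ^ 2 := by rw [← exp_nat_mul]; ring_nf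
    _ ≤ 2⁻¹ * (∫ x, √(g x) ∂Q) ^ 2 := by
      gcongr
      exact exp_neg_integral_llr_div_two_le hPQ hllr
    _ ≤ ∫ x, min 1 (g x) ∂Q := by linarith
    _ ≤ ∫ x in A, 1 ∂Q + ∫ x in Aᶜ, g x ∂Q :=
      integral_min_le_setIntegral_add_setIntegral_compl hA (integrable_const 1) hg
    _ = (Q A).toReal + (P Aᶜ).toReal := by
      rw [Measure.setIntegral_toReal_rnDeriv hPQ]
      simp [measureReal_def]
end

section
/- Fix σ > 1. Define for step size h = 1/K the error probabilities α_K = Q_Γ((σ²/(σ²-1))(K log σ + log τ_K), K/2) and β_K = P_Γ((1/(σ²-1))(K log σ + log τ_K), K/2). There exists a choice of thresholds τ_K > 0 such that both α_K → 0 and β_K → 0 as K → ∞. -/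
open Filter

/-- Regularized lower incomplete Gamma function
`P_Γ(x, a) = (1/Γ(a)) ∫₀^x t^(a-1) e^(-t) dt`. -/
noncomputable def regLowerGamma (x a : ℝ) : ℝ :=
  (1 / Real.Gamma a) * ∫ t in (0:ℝ)..x, t ^ (a - 1) * Real.exp (-t)

/-!
Both error probabilities are tails of a `Γ(K/2)` distribution cut at `c K`: the lower tail with
`2c < 1` and the upper tail with `2c > 1`, so the cut is a fixed proportion away from the mean
`K/2`. Exponential tilting (a Chernoff bound) with `1 + θ = 1/(2c)` bounds either tail by `ρ^K`
with `log ρ = (1 - 2c + log (2c))/2 < 0`. Already the constant threshold `τ_K = 1` (the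
maximum-likelihood test) puts the cuts at `c = log σ / (σ² - 1)` and `c = σ² log σ / (σ² - 1)`,
on the two required sides of `1/2` because `log x < x - 1` for `x = σ²` and `x = σ⁻²`.
-/

open MeasureTheory Set Real

lemma integrableOn_rpow_mul_exp_neg_mul_Ioi {s r : ℝ} (hs : 0 < s) (hr : 0 < r) :
    IntegrableOn (fun t : ℝ => t ^ (s - 1) * exp (-(r * t))) (Ioi 0) :=
  Integrable.of_integral_ne_zero (by rw [integral_rpow_mul_exp_neg_mul_Ioi hs hr]; positivity)

lemma integrableOn_rpow_mul_exp_neg_Ioi {s : ℝ} (hs : 0 < s) :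
    IntegrableOn (fun t : ℝ => t ^ (s - 1) * exp (-t)) (Ioi 0) := by
  simpa using integrableOn_rpow_mul_exp_neg_mul_Ioi hs one_pos

lemma integral_rpow_mul_exp_neg_Ioi {s : ℝ} (hs : 0 < s) :
    ∫ t in Ioi (0:ℝ), t ^ (s - 1) * exp (-t) = Gamma s := by
  simpa using integral_rpow_mul_exp_neg_mul_Ioi hs one_pos

/-- Exponential tilting: `e^{-t} ≤ e^{θ x} e^{-(1 + θ) t}` wherever `θ (x - t) ≥ 0`. -/
lemma setIntegral_rpow_mul_exp_neg_le {s θ x : ℝ} {S : Set ℝ} (hs : 0 < s) (hθ : -1 < θ)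
    (hS0 : S ⊆ Ioi 0) (hθS : ∀ t ∈ S, 0 ≤ θ * (x - t)) (hS : MeasurableSet S) :
    ∫ t in S, t ^ (s - 1) * exp (-t) ≤ exp (θ * x) * (1 / (1 + θ)) ^ s * Gamma s := by
  have h1θ : 0 < 1 + θ := by linarith
  have htilt : IntegrableOn (fun t => exp (θ * x) * (t ^ (s - 1) * exp (-((1 + θ) * t))))
      (Ioi 0) := (integrableOn_rpow_mul_exp_neg_mul_Ioi hs h1θ).const_mul _
  calc ∫ t in S, t ^ (s - 1) * exp (-t)
      ≤ ∫ t in S, exp (θ * x) * (t ^ (s - 1) * exp (-((1 + θ) * t))) := by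
        refine setIntegral_mono_on ((integrableOn_rpow_mul_exp_neg_Ioi hs).mono_set hS0)
          (htilt.mono_set hS0) hS fun t ht => ?_
        have : 0 < t := hS0 ht
        rw [mul_left_comm, ← exp_add]
        gcongr
        linarith [hθS t ht]
    _ ≤ ∫ t in Ioi 0, exp (θ * x) * (t ^ (s - 1) * exp (-((1 + θ) * t))) := by
        refine setIntegral_mono_set htilt ?_ hS0.eventuallyLE
        filter_upwards [ae_restrict_mem measurableSet_Ioi] with t (ht : 0 < t)
        positivity
    _ = exp (θ * x) * (1 / (1 + θ)) ^ s * Gamma s := by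
        rw [integral_const_mul, integral_rpow_mul_exp_neg_mul_Ioi hs h1θ, mul_assoc]

section regLowerGamma

variable {x s θ : ℝ}

lemma regLowerGamma_eq_setIntegral_div (hx : 0 ≤ x) :
    regLowerGamma x s = (∫ t in Ioc 0 x, t ^ (s - 1) * exp (-t)) / Gamma s := by
  rw [regLowerGamma, intervalIntegral.integral_of_le hx, one_div_mul_eq_div]

lemma one_sub_regLowerGamma_eq_setIntegral_div (hs : 0 < s) (hx : 0 ≤ x) :
    1 - regLowerGamma x s = (∫ t in Ioi x, t ^ (s - 1) * exp (-t)) / Gamma s := by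
  have hint := integrableOn_rpow_mul_exp_neg_Ioi hs
  have hsplit : Gamma s = (∫ t in Ioc 0 x, t ^ (s - 1) * exp (-t))
      + ∫ t in Ioi x, t ^ (s - 1) * exp (-t) := by
    rw [← integral_rpow_mul_exp_neg_Ioi hs, ← Ioc_union_Ioi_eq_Ioi hx,
      setIntegral_union Ioc_disjoint_Ioi_same measurableSet_Ioi
        (hint.mono_set Ioc_subset_Ioi_self) (hint.mono_set (Ioi_subset_Ioi hx))]
  rw [regLowerGamma_eq_setIntegral_div hx, eq_div_iff (Gamma_pos_of_pos hs).ne', sub_mul,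
    div_mul_cancel₀ _ (Gamma_pos_of_pos hs).ne']
  linarith

lemma regLowerGamma_nonneg (hs : 0 < s) (hx : 0 ≤ x) : 0 ≤ regLowerGamma x s := by
  rw [regLowerGamma_eq_setIntegral_div hx]
  refine div_nonneg (setIntegral_nonneg measurableSet_Ioc fun t ht => ?_) (Gamma_pos_of_pos hs).le
  have : 0 < t := ht.1
  positivity

lemma one_sub_regLowerGamma_nonneg (hs : 0 < s) (hx : 0 ≤ x) : 0 ≤ 1 - regLowerGamma x s := by
  rw [one_sub_regLowerGamma_eq_setIntegral_div hs hx]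
  refine div_nonneg (setIntegral_nonneg measurableSet_Ioi fun t ht => ?_) (Gamma_pos_of_pos hs).le
  have : 0 < t := hx.trans_lt ht
  positivity

lemma regLowerGamma_le_exp_mul_rpow (hs : 0 < s) (hx : 0 ≤ x) (hθ : 0 ≤ θ) :
    regLowerGamma x s ≤ exp (θ * x) * (1 / (1 + θ)) ^ s := by
  rw [regLowerGamma_eq_setIntegral_div hx, div_le_iff₀ (Gamma_pos_of_pos hs)]
  exact setIntegral_rpow_mul_exp_neg_le hs (by linarith) Ioc_subset_Ioi_self
    (fun t ht => mul_nonneg hθ (sub_nonneg.2 ht.2)) measurableSet_Ioc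

lemma one_sub_regLowerGamma_le_exp_mul_rpow (hs : 0 < s) (hx : 0 ≤ x) (hθ : -1 < θ)
    (hθ0 : θ ≤ 0) :
    1 - regLowerGamma x s ≤ exp (θ * x) * (1 / (1 + θ)) ^ s := by
  rw [one_sub_regLowerGamma_eq_setIntegral_div hs hx, div_le_iff₀ (Gamma_pos_of_pos hs)]
  exact setIntegral_rpow_mul_exp_neg_le hs hθ (Ioi_subset_Ioi hx)
    (fun t ht => mul_nonneg_of_nonpos_of_nonpos hθ0 (sub_nonpos.2 (le_of_lt ht)))
    measurableSet_Ioi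

end regLowerGamma

section Asymptotics

variable {c : ℝ}

noncomputable def gammaChernoffRate (c : ℝ) : ℝ := exp ((1 - 2 * c + log (2 * c)) / 2)

lemma exp_mul_rpow_optimalTilt_eq_gammaChernoffRate_pow (hc : 0 < c) (K : ℕ) :
    exp ((1 / (2 * c) - 1) * (c * K)) * (1 / (1 + (1 / (2 * c) - 1))) ^ ((K : ℝ) / 2)
      = gammaChernoffRate c ^ K := by
  have h2c : 1 / (1 + (1 / (2 * c) - 1)) = 2 * c := by field_simp; ring
  rw [gammaChernoffRate, h2c, rpow_def_of_pos (by positivity), ← exp_add, ← exp_nat_mul]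
  congr 1
  field_simp

lemma tendsto_gammaChernoffRate_pow (hc : 0 < c) (hc1 : 2 * c ≠ 1) :
    Tendsto (fun K : ℕ => gammaChernoffRate c ^ K) atTop (nhds 0) := by
  have hlog := log_lt_sub_one_of_pos (by positivity) hc1
  exact tendsto_pow_atTop_nhds_zero_of_lt_one (exp_nonneg _) (exp_lt_one_iff.2 (by linarith))

theorem tendsto_regLowerGamma_mul_atTop (hc : 0 < c) (hc1 : 2 * c < 1) :
    Tendsto (fun K : ℕ => regLowerGamma (c * K) ((K : ℝ) / 2)) atTop (nhds 0) := by
  refine squeeze_zero' ?_ ?_ (tendsto_gammaChernoffRate_pow hc hc1.ne)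
  all_goals filter_upwards [eventually_gt_atTop 0] with K (hK : 0 < K)
  · exact regLowerGamma_nonneg (by positivity) (by positivity)
  · rw [← exp_mul_rpow_optimalTilt_eq_gammaChernoffRate_pow hc K]
    refine regLowerGamma_le_exp_mul_rpow (by positivity) (by positivity) ?_
    rw [sub_nonneg, le_div_iff₀ (by positivity)]
    linarith

theorem tendsto_one_sub_regLowerGamma_mul_atTop (hc1 : 1 < 2 * c) :
    Tendsto (fun K : ℕ => 1 - regLowerGamma (c * K) ((K : ℝ) / 2)) atTop (nhds 0) := by
  have hc : 0 < c := by linarith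
  refine squeeze_zero' ?_ ?_ (tendsto_gammaChernoffRate_pow hc hc1.ne')
  all_goals filter_upwards [eventually_gt_atTop 0] with K (hK : 0 < K)
  · exact one_sub_regLowerGamma_nonneg (by positivity) (by positivity)
  · rw [← exp_mul_rpow_optimalTilt_eq_gammaChernoffRate_pow hc K]
    have : 0 < 1 / (2 * c) := by positivity
    refine one_sub_regLowerGamma_le_exp_mul_rpow (by positivity) (by positivity) (by linarith) ?_
    rw [sub_nonpos, div_le_one (by positivity)]
    linarith

end Asymptotics

/-- For `σ > 1` there is a choice of thresholds `τ_K > 0` such that both the type-I error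
`α_K = Q_Γ((σ²/(σ²-1))(K log σ + log τ_K), K/2)` and the type-II error
`β_K = P_Γ((1/(σ²-1))(K log σ + log τ_K), K/2)` tend to `0` as `K → ∞`. -/
theorem asymptotically_perfect_test (σ : ℝ) (hσ : 1 < σ) :
    ∃ τ : ℕ → ℝ, (∀ K, 0 < τ K) ∧
      Tendsto (fun K : ℕ =>
          1 - regLowerGamma ((σ ^ 2 / (σ ^ 2 - 1)) * (K * Real.log σ + Real.log (τ K)))
            ((K : ℝ) / 2)) atTop (nhds 0) ∧
      Tendsto (fun K : ℕ =>
          regLowerGamma ((1 / (σ ^ 2 - 1)) * (K * Real.log σ + Real.log (τ K)))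
            ((K : ℝ) / 2)) atTop (nhds 0) := by
  have hσ2 : 1 < σ ^ 2 := by nlinarith
  have hlog_sq : log (σ ^ 2) = 2 * log σ := by simp [log_pow]
  have hβ : 2 * log σ < σ ^ 2 - 1 :=
    hlog_sq ▸ log_lt_sub_one_of_pos (by positivity) hσ2.ne'
  have hα : σ ^ 2 - 1 < σ ^ 2 * (2 * log σ) := by
    have h := log_lt_sub_one_of_pos (x := (σ ^ 2)⁻¹) (by positivity) (inv_ne_one.2 hσ2.ne')
    rw [log_inv, hlog_sq] at h
    have h' := mul_lt_mul_of_pos_left h (by positivity : 0 < σ ^ 2)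
    rw [mul_sub, mul_inv_cancel₀ (by positivity), mul_one] at h'
    linarith
  refine ⟨fun _ => 1, fun _ => one_pos, ?_, ?_⟩
  · refine (tendsto_one_sub_regLowerGamma_mul_atTop (c := σ ^ 2 * log σ / (σ ^ 2 - 1)) ?_).congr
      fun K => by rw [log_one]; ring_nf
    rw [mul_div_assoc', one_lt_div (by linarith)]
    linarith
  · refine (tendsto_regLowerGamma_mul_atTop (c := log σ / (σ ^ 2 - 1))
      (div_pos (log_pos hσ) (by linarith)) ?_).congr fun K => by rw [log_one]; ring_nf
    rw [mul_div_assoc', div_lt_one (by linarith)]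
    exact hβ
end
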